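/- Define A(x,y,z) = (z−1)·log|z−1| − (z+1)·log|z+1| − 2xz. Then for all x, y ∈ ℝ and all z ∈ ℝ with z ≠ 1 and z ≠ −1, the Rashevsky identity A''(x,y,z)·(z²−1) + z·A'_y + A'_x − A_y = 0 holds; that is, the geodesic equation of the corresponding two-dimensional Finsler metric is y'' = y'² − 1, whose right-hand side is a polynomial of degree at most three in y'. -/

import Mathlib

noncomputable section

/-- Partial derivative in the third variable `z`. -/
def pZ (A : ℝ → ℝ → ℝ → ℝ) : ℝ → ℝ → ℝ → ℝ := fun x y z => deriv (fun t => A x y t) z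

/-- Partial derivative in the first variable `x`. -/
def pX (A : ℝ → ℝ → ℝ → ℝ) : ℝ → ℝ → ℝ → ℝ := fun x y z => deriv (fun t => A t y z) x

/-- Partial derivative in the second variable `y`. -/
def pY (A : ℝ → ℝ → ℝ → ℝ) : ℝ → ℝ → ℝ → ℝ := fun x y z => deriv (fun t => A x t z) y

/-- The associated fundamental function
`A(x,y,z) = (z−1)·log|z−1| − (z+1)·log|z+1| − 2xz`. -/
def Aex : ℝ → ℝ → ℝ → ℝ :=
  fun x _y z => (z - 1) * Real.log |z - 1| - (z + 1) * Real.log |z + 1| - 2 * x * z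

/-! Away from `z = ±1` we have `(d/dz) (z + a) log|z + a| = log|z + a| + 1`, so
`A' = log|z - 1| - log|z + 1| - 2x`, `A'' = 2 / (z² - 1)` and `A'_x = -2`, while `A` does not
depend on `y`. The Rashevsky equation then reads `2 f / (z² - 1) - 2 = 0`, i.e. `f = z² - 1`. -/

open Real

lemma pZ_eq_of_forall_eq {A : ℝ → ℝ → ℝ → ℝ} (hA : ∀ x y y' z, A x y z = A x y' z)
    (x y y' z : ℝ) : pZ A x y z = pZ A x y' z := by
  unfold pZ
  congr 1
  exact funext (hA x y y')

lemma pY_eq_zero_of_forall_eq {A : ℝ → ℝ → ℝ → ℝ} (hA : ∀ x y y' z, A x y z = A x y' z)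
    (x y z : ℝ) : pY A x y z = 0 := by
  have hconst : (fun t => A x t z) = fun _ => A x y z := funext fun t => hA x t y z
  simp only [pY, hconst, deriv_const]

lemma hasDerivAt_Aex (x y : ℝ) {z : ℝ} (h1 : z ≠ 1) (h2 : z ≠ -1) :
    HasDerivAt (fun t => Aex x y t) (log (z - 1) - log (z + 1) - 2 * x) z := by
  have hm : HasDerivAt (fun t => (t - 1) * log (t - 1)) (log (z - 1) + 1) z :=
    (hasDerivAt_mul_log (sub_ne_zero.2 h1)).comp_sub_const z 1
  have hp : HasDerivAt (fun t => (t + 1) * log (t + 1)) (log (z + 1) + 1) z :=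
    (hasDerivAt_mul_log (by rwa [ne_eq, add_eq_zero_iff_eq_neg])).comp_add_const z 1
  simp only [Aex, log_abs]
  exact ((hm.sub hp).sub ((hasDerivAt_id z).const_mul (2 * x))).congr_deriv (by ring)

lemma pZ_Aex (x y : ℝ) {z : ℝ} (h1 : z ≠ 1) (h2 : z ≠ -1) :
    pZ Aex x y z = log (z - 1) - log (z + 1) - 2 * x :=
  (hasDerivAt_Aex x y h1 h2).deriv

lemma pZ_pZ_Aex (x y : ℝ) {z : ℝ} (h1 : z ≠ 1) (h2 : z ≠ -1) :
    pZ (pZ Aex) x y z = (z - 1)⁻¹ - (z + 1)⁻¹ := by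
  have hlog : HasDerivAt (fun t => log (t - 1) - log (t + 1) - 2 * x)
      ((z - 1)⁻¹ - (z + 1)⁻¹) z :=
    (((hasDerivAt_log (sub_ne_zero.2 h1)).comp_sub_const z 1).sub
      ((hasDerivAt_log (by rwa [ne_eq, add_eq_zero_iff_eq_neg])).comp_add_const z 1)).sub_const _
  refine (hlog.congr_of_eventuallyEq ?_).deriv
  filter_upwards [eventually_ne_nhds h1, eventually_ne_nhds h2] with t ht1 ht2
    using pZ_Aex x y ht1 ht2

lemma pX_pZ_Aex (x y : ℝ) {z : ℝ} (h1 : z ≠ 1) (h2 : z ≠ -1) : pX (pZ Aex) x y z = -2 := by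
  have hlin : (fun t => pZ Aex t y z) = fun t => log (z - 1) - log (z + 1) - 2 * t :=
    funext fun t => pZ_Aex t y h1 h2
  simp only [pX, hlin]
  exact ((((hasDerivAt_id x).const_mul 2).const_sub _).congr_deriv (by ring)).deriv

/-- for `A(x,y,z) = (z−1)log|z−1| − (z+1)log|z+1| − 2xz` and `z ≠ ±1`,
the Rashevsky identity `A''·(z²−1) + z·A'_y + A'_x − A_y = 0` holds; the geodesic
equation is `y'' = y'² − 1`, whose right-hand side is a polynomial of degree ≤ 3. -/
theorem stmt_7 :
    (∀ x y z : ℝ, z ≠ 1 → z ≠ -1 →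
      pZ (pZ Aex) x y z * (z ^ 2 - 1) + z * pY (pZ Aex) x y z
        + pX (pZ Aex) x y z - pY Aex x y z = 0) ∧
    ∃ c₀ c₁ c₂ c₃ : ℝ, ∀ w : ℝ, w ^ 2 - 1 = c₀ + c₁ * w + c₂ * w ^ 2 + c₃ * w ^ 3 := by
  refine ⟨fun x y z h1 h2 => ?_, -1, 0, 1, 0, fun w => by ring⟩
  have h1' : z - 1 ≠ 0 := sub_ne_zero.2 h1
  have h2' : z + 1 ≠ 0 := by rwa [ne_eq, add_eq_zero_iff_eq_neg]
  rw [pZ_pZ_Aex x y h1 h2, pX_pZ_Aex x y h1 h2,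
    pY_eq_zero_of_forall_eq (pZ_eq_of_forall_eq fun _ _ _ _ => rfl),
    pY_eq_zero_of_forall_eq fun _ _ _ _ => rfl]
  field_simp
  ring
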